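/- Let X be a finite set, θ, θ' two types with prior probabilities π(θ), π(θ') ≥ 0 summing to 1 and π(θ) > 0, and let p^θ, p^{θ'} be probability mass functions on X. Let X⁺ = {x ∈ X : p^θ(x)π(θ) + p^{θ'}(x)π(θ') > 0}. Then the Bayesian update preserves the belief in expectation in a submartingale sense: ∑_{x ∈ X⁺} p^θ(x) · (p^θ(x)π(θ)) / (p^θ(x)π(θ) + p^{θ'}(x)π(θ')) ≥ π(θ). -/

import Mathlib

/-! The prior `a` of the true type `p` is at most its expected posterior `a * p x / g x`, where
`g = a p + b q` is the marginal law of the signal. Indeed, the expectation equals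
`a * ∑ p x ^ 2 / g x`, and since both `p` and `g` are probability distributions on the
support of `g`, the Cauchy–Schwarz inequality in Sedrakyan's form gives
`1 = (∑ p x) ^ 2 / ∑ g x ≤ ∑ p x ^ 2 / g x`. -/

open Finset

theorem one_le_sum_sq_div_of_sum_eq_one {ι : Type*} (s : Finset ι) {f g : ι → ℝ}
    (hg : ∀ i ∈ s, 0 < g i) (hf1 : ∑ i ∈ s, f i = 1) (hg1 : ∑ i ∈ s, g i = 1) :
    1 ≤ ∑ i ∈ s, f i ^ 2 / g i := by
  simpa [hf1, hg1] using sq_sum_div_le_sum_sq_div s f hg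

theorem stmt0 {X : Type*} [Fintype X] (p q : X → ℝ) (a b : ℝ)
    (hp0 : ∀ x, 0 ≤ p x) (hp1 : ∑ x, p x = 1)
    (hq0 : ∀ x, 0 ≤ q x) (hq1 : ∑ x, q x = 1)
    (ha : 0 < a) (hb : 0 ≤ b) (hab : a + b = 1) :
    a ≤ ∑ x ∈ univ.filter (fun x => 0 < p x * a + q x * b),
        p x * (p x * a) / (p x * a + q x * b) := by
  set S := univ.filter (fun x => 0 < p x * a + q x * b)
  have hqb : ∀ x, 0 ≤ q x * b := fun x => mul_nonneg (hq0 x) hb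
  have hpS : ∑ x ∈ S, p x = 1 := by
    rw [sum_filter_of_ne fun x _ hx => ?_, hp1]
    have := mul_pos ((hp0 x).lt_of_ne' hx) ha
    linarith [hqb x]
  have hgS : ∑ x ∈ S, (p x * a + q x * b) = 1 := by
    rw [sum_filter_of_ne fun x _ hx => (add_nonneg (mul_nonneg (hp0 x) ha.le) (hqb x)).lt_of_ne' hx,
      sum_add_distrib, ← sum_mul, ← sum_mul, hp1, hq1]
    linarith
  calc a = a * 1 := (mul_one a).symm
    _ ≤ a * ∑ x ∈ S, p x ^ 2 / (p x * a + q x * b) := by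
        gcongr
        exact one_le_sum_sq_div_of_sum_eq_one S (fun x hx => (mem_filter.mp hx).2) hpS hgS
    _ = ∑ x ∈ S, p x * (p x * a) / (p x * a + q x * b) := by
        rw [mul_sum]
        exact sum_congr rfl fun x _ => by ring
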